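/- Let h(t) = -Σ_{j,k≥1} log(1 - exp(-j·k·(j+k)·t/2)) for t > 0. Then h(t) = O(t^{-2/3}) as t → 0+. -/

import Mathlib

/-- `h t = -∑_{j,k ≥ 1} log(1 - exp(-jk(j+k)t/2))`. -/
noncomputable def su3h (t : ℝ) : ℝ :=
  -∑' p : ℕ × ℕ,
    Real.log (1 - Real.exp (-(((p.1+1) * (p.2+1) * ((p.1+1) + (p.2+1)) : ℕ) : ℝ) * t / 2))

open Finset


lemma sum_inv_sqrt_le (v : ℕ) :
    ∑ j ∈ range v, (1 : ℝ) / Real.sqrt ((j:ℝ) + 1) ≤ 2 * Real.sqrt (v:ℝ) := by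
  induction v with
  | zero => simp
  | succ v ih =>
    rw [Finset.sum_range_succ]
    have hb : (0:ℝ) < Real.sqrt ((v:ℝ)+1) := Real.sqrt_pos.2 (by positivity)
    have ha : (0:ℝ) ≤ Real.sqrt (v:ℝ) := Real.sqrt_nonneg _
    have hab : Real.sqrt (v:ℝ) ≤ Real.sqrt ((v:ℝ)+1) := Real.sqrt_le_sqrt (by linarith)
    have hsq : Real.sqrt ((v:ℝ)+1) * Real.sqrt ((v:ℝ)+1) = (v:ℝ)+1 :=
      Real.mul_self_sqrt (by positivity)
    have hsq' : Real.sqrt (v:ℝ) * Real.sqrt (v:ℝ) = (v:ℝ) := Real.mul_self_sqrt (by positivity)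
    have h1 : (1:ℝ)/Real.sqrt ((v:ℝ)+1) ≤ 2*Real.sqrt ((v:ℝ)+1) - 2*Real.sqrt (v:ℝ) := by
      rw [div_le_iff₀ hb]
      nlinarith [hsq, hsq', hab, hb, ha]
    push_cast
    linarith

lemma sum_inv_three_half_tail (N : ℕ) (hN : 1 ≤ N) (v : ℕ) :
    ∑ j ∈ Ico N v, (1:ℝ) / (((j:ℝ)+1) * Real.sqrt ((j:ℝ)+1)) ≤ 2 / Real.sqrt (N:ℝ) := by
  have hN0 : (0:ℝ) < Real.sqrt (N:ℝ) := Real.sqrt_pos.2 (by exact_mod_cast Nat.pos_of_ne_zero (by omega))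
  rcases le_or_gt v N with h | h
  · rw [Finset.Ico_eq_empty (by omega)]
    simp only [Finset.sum_empty]
    positivity
  · have key : ∀ w, N ≤ w → ∑ j ∈ Ico N w, (1:ℝ) / (((j:ℝ)+1) * Real.sqrt ((j:ℝ)+1))
        ≤ 2 / Real.sqrt (N:ℝ) - 2 / Real.sqrt (w:ℝ) := by
      intro w hw
      induction w, hw using Nat.le_induction with
      | base => simp
      | succ w hw ih =>
        rw [Finset.sum_Ico_succ_top hw]
        have hw1 : (1:ℝ) ≤ (w:ℝ) := by exact_mod_cast Nat.one_le_iff_ne_zero.2 (by omega)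
        have hb : (0:ℝ) < Real.sqrt ((w:ℝ)+1) := Real.sqrt_pos.2 (by positivity)
        have ha : (0:ℝ) < Real.sqrt (w:ℝ) := Real.sqrt_pos.2 (by linarith)
        have hab : Real.sqrt (w:ℝ) ≤ Real.sqrt ((w:ℝ)+1) := Real.sqrt_le_sqrt (by linarith)
        have hsq : Real.sqrt ((w:ℝ)+1) * Real.sqrt ((w:ℝ)+1) = (w:ℝ)+1 :=
          Real.mul_self_sqrt (by positivity)
        have hsq' : Real.sqrt (w:ℝ) * Real.sqrt (w:ℝ) = (w:ℝ) := Real.mul_self_sqrt (by positivity)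
        set a := Real.sqrt (w:ℝ)
        set b := Real.sqrt ((w:ℝ)+1)
        have hr : 2 / a - 2 / b = 2 / (a*b*(a+b)) := by
          rw [div_sub_div _ _ (ne_of_gt ha) (ne_of_gt hb), div_eq_div_iff (by positivity) (by positivity)]
          linear_combination (2*a*b) * hsq - (2*a*b) * hsq'
        have step : (1:ℝ) / (((w:ℝ)+1) * b) ≤ 2 / a - 2 / b := by
          rw [hr, ← hsq, div_le_div_iff₀ (by positivity) (by positivity)]
          nlinarith [mul_nonneg (mul_nonneg (sub_nonneg.2 hab) hb.le) hb.le,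
            mul_nonneg (mul_nonneg (sub_nonneg.2 hab) ha.le) hb.le, ha, hb]
        push_cast
        push_cast at ih
        linarith
    have hv0 : (0:ℝ) < Real.sqrt (v:ℝ) := Real.sqrt_pos.2 (by exact_mod_cast (by omega : 0 < v))
    have h2 : 0 ≤ 2 / Real.sqrt (v:ℝ) := by positivity
    linarith [key v (by omega)]

lemma sum_inv_three_half (v : ℕ) :
    ∑ j ∈ range v, (1:ℝ) / (((j:ℝ)+1) * Real.sqrt ((j:ℝ)+1)) ≤ 3 := by
  rcases Nat.eq_zero_or_pos v with h | h
  · subst h; simp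
  · rw [Finset.range_eq_Ico, ← Finset.sum_Ico_consecutive _ (Nat.zero_le 1) h]
    have h0 : ∑ j ∈ Finset.Ico (0:ℕ) 1, (1:ℝ) / (((j:ℝ)+1) * Real.sqrt ((j:ℝ)+1)) = 1 := by
      norm_num
    have h1 := sum_inv_three_half_tail 1 le_rfl v
    have h2 : Real.sqrt ((1:ℕ):ℝ) = 1 := by norm_num
    rw [h2] at h1
    rw [h0]
    linarith

lemma sum_inv_sq_tail (V : ℕ) (hV : 1 ≤ V) (v : ℕ) :
    ∑ j ∈ Ico V v, (1:ℝ) / ((j:ℝ)+1)^2 ≤ 1 / (V:ℝ) := by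
  have hV0 : (0:ℝ) < (V:ℝ) := by exact_mod_cast Nat.pos_of_ne_zero (by omega)
  rcases le_or_gt v V with h | h
  · rw [Finset.Ico_eq_empty (by omega)]
    simp only [Finset.sum_empty]
    positivity
  · have key : ∀ w, V ≤ w → ∑ j ∈ Ico V w, (1:ℝ) / ((j:ℝ)+1)^2
        ≤ 1 / (V:ℝ) - 1 / (w:ℝ) := by
      intro w hw
      induction w, hw using Nat.le_induction with
      | base => simp
      | succ w hw ih =>
        rw [Finset.sum_Ico_succ_top hw]
        have hw1 : (1:ℝ) ≤ (w:ℝ) := by exact_mod_cast Nat.one_le_iff_ne_zero.2 (by omega)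
        have step : (1:ℝ) / ((w:ℝ)+1)^2 ≤ 1 / (w:ℝ) - 1 / ((w:ℝ)+1) := by
          rw [div_sub_div _ _ (by positivity) (by positivity), div_le_div_iff₀ (by positivity) (by positivity)]
          nlinarith
        push_cast
        push_cast at ih
        linarith
    have hv0 : (0:ℝ) < (v:ℝ) := by exact_mod_cast (by omega : 0 < v)
    have h3 : 0 ≤ 1 / (v:ℝ) := by positivity
    linarith [key v (by omega)]

lemma sum_min_le (A B : ℕ → ℝ) (hA : ∀ j, 0 ≤ A j) (hB : ∀ j, 0 ≤ B j) (v M : ℕ) :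
    ∑ j ∈ range v, min (A j) (B j) ≤ ∑ j ∈ range M, A j + ∑ j ∈ Ico M v, B j := by
  have hdecomp : range v = range (min v M) ∪ Ico M v := by
    ext j
    simp only [Finset.mem_union, Finset.mem_range, Finset.mem_Ico, lt_min_iff]
    omega
  have hdisj : Disjoint (range (min v M)) (Ico M v) := by
    rw [Finset.disjoint_left]
    intro j hj hj'
    simp only [Finset.mem_range, lt_min_iff] at hj
    simp only [Finset.mem_Ico] at hj'
    omega
  rw [hdecomp, Finset.sum_union hdisj]
  have h1 : ∑ j ∈ range (min v M), min (A j) (B j) ≤ ∑ j ∈ range M, A j := by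
    calc ∑ j ∈ range (min v M), min (A j) (B j) ≤ ∑ j ∈ range (min v M), A j :=
          Finset.sum_le_sum (fun j _ => min_le_left _ _)
      _ ≤ ∑ j ∈ range M, A j := Finset.sum_le_sum_of_subset_of_nonneg
          (Finset.range_subset_range.2 (min_le_right _ _)) (fun j _ _ => hA j)
  have h2 : ∑ j ∈ Ico M v, min (A j) (B j) ≤ ∑ j ∈ Ico M v, B j :=
    Finset.sum_le_sum (fun j _ => min_le_right _ _)
  linarith

noncomputable def gfun (x : ℝ) : ℝ := -Real.log (1 - Real.exp (-x))

lemma one_sub_exp_pos {x : ℝ} (hx : 0 < x) : 0 < 1 - Real.exp (-x) := by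
  have : Real.exp (-x) < 1 := Real.exp_lt_one_iff.2 (by linarith)
  linarith

lemma gfun_nonneg {x : ℝ} (hx : 0 < x) : 0 ≤ gfun x := by
  have h0 := one_sub_exp_pos hx
  have h1 : 1 - Real.exp (-x) ≤ 1 := by linarith [Real.exp_pos (-x)]
  have := Real.log_nonpos (by linarith) h1
  unfold gfun; linarith

lemma gfun_anti {x y : ℝ} (hx : 0 < x) (hxy : x ≤ y) : gfun y ≤ gfun x := by
  have h0 := one_sub_exp_pos hx
  have h1 : Real.exp (-y) ≤ Real.exp (-x) := Real.exp_le_exp.2 (by linarith)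
  have := Real.log_le_log h0 (by linarith : 1 - Real.exp (-x) ≤ 1 - Real.exp (-y))
  unfold gfun; linarith

lemma gfun_le_inv_exp_sub_one {x : ℝ} (hx : 0 < x) :
    gfun x ≤ 1 / (Real.exp x - 1) := by
  have h0 := one_sub_exp_pos hx
  have hlog := Real.log_le_sub_one_of_pos (show 0 < (1 - Real.exp (-x))⁻¹ by positivity)
  rw [Real.log_inv] at hlog
  have hexp1 : 1 < Real.exp x := by
    rw [show (1:ℝ) = Real.exp 0 by simp]
    exact Real.exp_lt_exp.2 hx
  have heq : (1 - Real.exp (-x))⁻¹ - 1 = 1 / (Real.exp x - 1) := by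
    have hene : Real.exp x ≠ 0 := (Real.exp_pos x).ne'
    have hne2 : Real.exp x - 1 ≠ 0 := by linarith
    have hne3 : 1 - Real.exp (-x) ≠ 0 := (one_sub_exp_pos hx).ne'
    rw [Real.exp_neg] at hne3 ⊢
    field_simp
    ring
  unfold gfun
  linarith [heq ▸ hlog]

lemma sqrt_two_le_three_halves : Real.sqrt 2 ≤ 3/2 := by
  nlinarith [Real.sq_sqrt (by norm_num : (0:ℝ) ≤ 2), Real.sqrt_nonneg 2]

lemma sqrt_le_self' {x : ℝ} (hx : 1 ≤ x) : Real.sqrt x ≤ x := by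
  nlinarith [Real.sq_sqrt (by linarith : (0:ℝ) ≤ x), Real.sqrt_nonneg x,
    Real.one_le_sqrt.2 hx]

/-- `gfun x ≤ 4 / √x` for all `x > 0`. -/
lemma gfun_le_one_div_sqrt {x : ℝ} (hx : 0 < x) : gfun x ≤ 4 / Real.sqrt x := by
  have hsx : 0 < Real.sqrt x := Real.sqrt_pos.2 hx
  rcases le_or_gt x 1 with h1 | h1
  · have hexp : Real.exp (-x) ≤ 1/(1+x) := by
      rw [Real.exp_neg, div_eq_inv_mul, mul_one]
      exact inv_anti₀ (by linarith) (by linarith [Real.add_one_le_exp x])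
    have hlow : x/2 ≤ 1 - Real.exp (-x) := by
      have : 1/(1+x) ≤ 1 - x/2 := by
        rw [div_le_iff₀ (by linarith)]
        nlinarith
      linarith
    have hx2 : (0:ℝ) < x/2 := by linarith
    have hmono := Real.log_le_log hx2 hlow
    have hlogeq : Real.log (x/2) = - Real.log (2/x) := by
      rw [← Real.log_inv]
      congr 1
      rw [inv_div]
    have h2x : gfun x ≤ Real.log (2/x) := by
      unfold gfun
      rw [hlogeq] at hmono
      linarith
    have hy : (0:ℝ) < 2/x := by positivity
    have hsy : 0 < Real.sqrt (2/x) := Real.sqrt_pos.2 hy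
    have hlog2 : Real.log (2/x) ≤ 2 * Real.sqrt (2/x) := by
      have hl := Real.log_le_sub_one_of_pos hsy
      have hls : Real.log (Real.sqrt (2/x)) = Real.log (2/x) / 2 := Real.log_sqrt hy.le
      rw [hls] at hl
      linarith
    have hsplit : Real.sqrt (2/x) = Real.sqrt 2 / Real.sqrt x :=
      Real.sqrt_div (by norm_num) x
    have hfin : 2 * (Real.sqrt 2 / Real.sqrt x) ≤ 4 / Real.sqrt x := by
      rw [show 2 * (Real.sqrt 2 / Real.sqrt x) = (2 * Real.sqrt 2) / Real.sqrt x from by ring,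
        div_le_div_iff₀ hsx hsx]
      nlinarith [sqrt_two_le_three_halves, hsx]
    calc gfun x ≤ Real.log (2/x) := h2x
      _ ≤ 2 * Real.sqrt (2/x) := hlog2
      _ = 2 * (Real.sqrt 2 / Real.sqrt x) := by rw [hsplit]
      _ ≤ 4 / Real.sqrt x := hfin
  · have hb := gfun_le_inv_exp_sub_one hx
    have hex : x ≤ Real.exp x - 1 := by linarith [Real.add_one_le_exp x]
    have h2 : 1 / (Real.exp x - 1) ≤ 1 / x := by
      apply div_le_div_of_nonneg_left (by norm_num) hx hex
    have h3 : 1 / x ≤ 4 / Real.sqrt x := by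
      rw [div_le_div_iff₀ hx (by positivity)]
      nlinarith [sqrt_le_self' h1.le, hsx]
    linarith

/-- `gfun x ≤ 4 / (x √x)` for all `x > 0`. -/
lemma gfun_le_one_div_pow32 {x : ℝ} (hx : 0 < x) : gfun x ≤ 4 / (x * Real.sqrt x) := by
  have hsx : 0 < Real.sqrt x := Real.sqrt_pos.2 hx
  rcases le_or_gt x 1 with h1 | h1
  · have := gfun_le_one_div_sqrt hx
    have h2 : 4 / Real.sqrt x ≤ 4 / (x * Real.sqrt x) := by
      apply div_le_div_of_nonneg_left (by norm_num) (by positivity)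
      nlinarith
    linarith
  · have hb := gfun_le_inv_exp_sub_one hx
    -- e^x - 1 ≥ x²/4 via e^x ≥ (1+x/2)²
    have hhalf : 1 + x/2 ≤ Real.exp (x/2) := by linarith [Real.add_one_le_exp (x/2)]
    have hsqe : Real.exp (x/2) * Real.exp (x/2) = Real.exp x := by
      rw [← Real.exp_add]; ring_nf
    have hex : x^2/4 ≤ Real.exp x - 1 := by nlinarith [Real.exp_pos (x/2)]
    have hx2 : (0:ℝ) < x^2/4 := by positivity
    have h2 : 1 / (Real.exp x - 1) ≤ 4 / x^2 := by
      rw [div_le_div_iff₀ (by linarith) (by positivity)]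
      nlinarith
    have h3 : 4 / x^2 ≤ 4 / (x * Real.sqrt x) := by
      apply div_le_div_of_nonneg_left (by norm_num) (by positivity)
      nlinarith [sqrt_le_self' h1.le]
    linarith

lemma inner_bound {t' : ℝ} (h0 : 0 < t') (h1 : t' < 1) (k : ℕ) :
    ∑ j ∈ range (k+1), gfun (((j:ℝ)+1) * (((k:ℝ)+1)^2 * t'))
      ≤ min (8 / (Real.sqrt ((k:ℝ)+1) * Real.sqrt t'))
          (20 / (((k:ℝ)+1)^2 * t')) := by
  set s : ℝ := ((k:ℝ)+1)^2 * t' with hs_def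
  have hk1 : (0:ℝ) < (k:ℝ)+1 := by positivity
  have hs : 0 < s := by positivity
  have hss : 0 < Real.sqrt s := Real.sqrt_pos.2 hs
  have hsk : 0 < Real.sqrt ((k:ℝ)+1) := Real.sqrt_pos.2 hk1
  have hst : 0 < Real.sqrt t' := Real.sqrt_pos.2 h0
  have hck : Real.sqrt ((k:ℝ)+1) * Real.sqrt ((k:ℝ)+1) = (k:ℝ)+1 :=
    Real.mul_self_sqrt hk1.le
  have hsqrt_s : Real.sqrt s = ((k:ℝ)+1) * Real.sqrt t' := by
    rw [hs_def, Real.sqrt_mul (by positivity), Real.sqrt_sq hk1.le]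
  -- pointwise bounds
  have hA : ∀ j : ℕ, gfun (((j:ℝ)+1) * s) ≤ (4 / Real.sqrt s) * (1 / Real.sqrt ((j:ℝ)+1)) := by
    intro j
    have hj1 : (0:ℝ) < (j:ℝ)+1 := by positivity
    have hsj : 0 < Real.sqrt ((j:ℝ)+1) := Real.sqrt_pos.2 hj1
    have h := gfun_le_one_div_sqrt (show 0 < ((j:ℝ)+1) * s by positivity)
    have hmul : Real.sqrt (((j:ℝ)+1) * s) = Real.sqrt ((j:ℝ)+1) * Real.sqrt s :=
      Real.sqrt_mul hj1.le s
    rw [hmul] at h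
    calc gfun (((j:ℝ)+1) * s) ≤ 4 / (Real.sqrt ((j:ℝ)+1) * Real.sqrt s) := h
      _ = (4 / Real.sqrt s) * (1 / Real.sqrt ((j:ℝ)+1)) := by
          rw [div_mul_div_comm, mul_one, mul_comm]
  have hB : ∀ j : ℕ, gfun (((j:ℝ)+1) * s)
      ≤ (4 / (s * Real.sqrt s)) * (1 / (((j:ℝ)+1) * Real.sqrt ((j:ℝ)+1))) := by
    intro j
    have hj1 : (0:ℝ) < (j:ℝ)+1 := by positivity
    have hsj : 0 < Real.sqrt ((j:ℝ)+1) := Real.sqrt_pos.2 hj1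
    have h := gfun_le_one_div_pow32 (show 0 < ((j:ℝ)+1) * s by positivity)
    have hmul : Real.sqrt (((j:ℝ)+1) * s) = Real.sqrt ((j:ℝ)+1) * Real.sqrt s :=
      Real.sqrt_mul hj1.le s
    rw [hmul] at h
    calc gfun (((j:ℝ)+1) * s)
        ≤ 4 / (((j:ℝ)+1) * s * (Real.sqrt ((j:ℝ)+1) * Real.sqrt s)) := h
      _ = (4 / (s * Real.sqrt s)) * (1 / (((j:ℝ)+1) * Real.sqrt ((j:ℝ)+1))) := by
          rw [div_mul_div_comm, mul_one]
          congr 1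
          ring
  apply le_min
  · -- bound A : 8 / (√(k+1) √t')
    calc ∑ j ∈ range (k+1), gfun (((j:ℝ)+1) * s)
        ≤ ∑ j ∈ range (k+1), (4 / Real.sqrt s) * (1 / Real.sqrt ((j:ℝ)+1)) :=
          Finset.sum_le_sum (fun j _ => hA j)
      _ = (4 / Real.sqrt s) * ∑ j ∈ range (k+1), (1:ℝ) / Real.sqrt ((j:ℝ)+1) := by
          rw [Finset.mul_sum]
      _ ≤ (4 / Real.sqrt s) * (2 * Real.sqrt (((k+1:ℕ)):ℝ)) := by
          apply mul_le_mul_of_nonneg_left (sum_inv_sqrt_le (k+1)) (by positivity)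
      _ = 8 / (Real.sqrt ((k:ℝ)+1) * Real.sqrt t') := by
          push_cast
          rw [hsqrt_s, div_mul_eq_mul_div, div_eq_div_iff (by positivity) (by positivity)]
          linear_combination (8 * Real.sqrt t') * hck
  · -- bound B : 20 / s
    rcases le_or_gt 1 s with hs1 | hs1
    · -- s ≥ 1 : use B pointwise everywhere
      have hss1 : 1 ≤ Real.sqrt s := Real.one_le_sqrt.2 hs1
      calc ∑ j ∈ range (k+1), gfun (((j:ℝ)+1) * s)
          ≤ ∑ j ∈ range (k+1), (4 / (s * Real.sqrt s)) * (1 / (((j:ℝ)+1) * Real.sqrt ((j:ℝ)+1))) :=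
            Finset.sum_le_sum (fun j _ => hB j)
        _ = (4 / (s * Real.sqrt s)) * ∑ j ∈ range (k+1), (1:ℝ) / (((j:ℝ)+1) * Real.sqrt ((j:ℝ)+1)) := by
            rw [Finset.mul_sum]
        _ ≤ (4 / (s * Real.sqrt s)) * 3 := by
            apply mul_le_mul_of_nonneg_left (sum_inv_three_half (k+1)) (by positivity)
        _ ≤ 20 / s := by
            rw [div_mul_eq_mul_div, div_le_div_iff₀ (by positivity) hs]
            nlinarith [hss, hs]
      done
    · -- s < 1 : split at N = ⌈s⁻¹⌉
      set N : ℕ := ⌈s⁻¹⌉₊ with hN_def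
      have hsinv : (1:ℝ) < s⁻¹ := (one_lt_inv₀ hs).2 hs1
      have hNle : s⁻¹ ≤ (N:ℝ) := Nat.le_ceil _
      have hN1 : 1 ≤ N := by
        by_contra hcon
        push_neg at hcon
        interval_cases N
        simp at hNle
        linarith
      have hNlt : (N:ℝ) < s⁻¹ + 1 := Nat.ceil_lt_add_one (by positivity)
      have hNpos : (0:ℝ) < (N:ℝ) := by exact_mod_cast Nat.pos_of_ne_zero (by omega)
      have hsN : 0 < Real.sqrt (N:ℝ) := Real.sqrt_pos.2 hNpos
      have hmin : ∀ j : ℕ, gfun (((j:ℝ)+1) * s)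
          ≤ min ((4 / Real.sqrt s) * (1 / Real.sqrt ((j:ℝ)+1)))
              ((4 / (s * Real.sqrt s)) * (1 / (((j:ℝ)+1) * Real.sqrt ((j:ℝ)+1)))) :=
        fun j => le_min (hA j) (hB j)
      calc ∑ j ∈ range (k+1), gfun (((j:ℝ)+1) * s)
          ≤ ∑ j ∈ range (k+1), min ((4 / Real.sqrt s) * (1 / Real.sqrt ((j:ℝ)+1)))
              ((4 / (s * Real.sqrt s)) * (1 / (((j:ℝ)+1) * Real.sqrt ((j:ℝ)+1)))) :=
            Finset.sum_le_sum (fun j _ => hmin j)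
        _ ≤ ∑ j ∈ range N, (4 / Real.sqrt s) * (1 / Real.sqrt ((j:ℝ)+1))
            + ∑ j ∈ Ico N (k+1), (4 / (s * Real.sqrt s)) * (1 / (((j:ℝ)+1) * Real.sqrt ((j:ℝ)+1))) := by
            apply _root_.sum_min_le
            · intro j; positivity
            · intro j; positivity
        _ ≤ (4 / Real.sqrt s) * (2 * Real.sqrt (N:ℝ))
            + (4 / (s * Real.sqrt s)) * (2 / Real.sqrt (N:ℝ)) := by
            apply add_le_add
            · rw [← Finset.mul_sum]
              exact mul_le_mul_of_nonneg_left (sum_inv_sqrt_le N) (by positivity)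
            · rw [← Finset.mul_sum]
              exact mul_le_mul_of_nonneg_left (sum_inv_three_half_tail N hN1 (k+1)) (by positivity)
        _ ≤ 20 / s := by
            have hsqN_up : Real.sqrt (N:ℝ) ≤ Real.sqrt 2 / Real.sqrt s := by
              rw [← Real.sqrt_div (by norm_num) s]
              apply Real.sqrt_le_sqrt
              rw [le_div_iff₀ hs]
              nlinarith [mul_lt_mul_of_pos_right hNlt hs, mul_inv_cancel₀ hs.ne', hs, hs1]
            have hsqN_lo : 1 / Real.sqrt (N:ℝ) ≤ Real.sqrt s := by
              rw [div_le_iff₀ hsN]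
              have h1 : Real.sqrt s⁻¹ ≤ Real.sqrt (N:ℝ) := Real.sqrt_le_sqrt hNle
              rw [Real.sqrt_inv] at h1
              calc (1:ℝ) = Real.sqrt s * (Real.sqrt s)⁻¹ := by field_simp
                _ ≤ Real.sqrt s * Real.sqrt (N:ℝ) := by
                    exact mul_le_mul_of_nonneg_left h1 hss.le
            have hs2 : Real.sqrt s * Real.sqrt s = s := Real.mul_self_sqrt hs.le
            have e1 : (4 / Real.sqrt s) * (2 * Real.sqrt (N:ℝ))
                ≤ (4 / Real.sqrt s) * (2 * (Real.sqrt 2 / Real.sqrt s)) := by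
              apply mul_le_mul_of_nonneg_left _ (by positivity)
              linarith
            have e1'a : (4 / Real.sqrt s) * (2 * (Real.sqrt 2 / Real.sqrt s))
                = 8 * Real.sqrt 2 / (Real.sqrt s * Real.sqrt s) := by ring
            have e1' : (4 / Real.sqrt s) * (2 * (Real.sqrt 2 / Real.sqrt s)) = 8 * Real.sqrt 2 / s := by
              rw [e1'a, hs2]
            have e2 : (4 / (s * Real.sqrt s)) * (2 / Real.sqrt (N:ℝ))
                ≤ (4 / (s * Real.sqrt s)) * (2 * Real.sqrt s) := by
              apply mul_le_mul_of_nonneg_left _ (by positivity)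
              rw [show (2:ℝ) / Real.sqrt (N:ℝ) = 2 * (1 / Real.sqrt (N:ℝ)) from by ring]
              linarith [mul_le_mul_of_nonneg_left hsqN_lo (by norm_num : (0:ℝ) ≤ 2)]
            have e2' : (4 / (s * Real.sqrt s)) * (2 * Real.sqrt s) = 8 / s := by
              rw [div_mul_eq_mul_div, div_eq_div_iff (by positivity) hs.ne']
              ring
            have hsqrt2 : Real.sqrt 2 ≤ 3/2 := sqrt_two_le_three_halves
            have : 8 * Real.sqrt 2 / s + 8 / s ≤ 20 / s := by
              rw [← add_div, div_le_div_iff₀ hs hs]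
              nlinarith [hs]
            linarith [e1, e1', e2, e2']

lemma outer_bound {t' : ℝ} (h0 : 0 < t') (h1 : t' < 1) (n : ℕ) :
    ∑ k ∈ range n, min (8 / (Real.sqrt ((k:ℝ)+1) * Real.sqrt t'))
        (20 / (((k:ℝ)+1)^2 * t')) ≤ 44 * t' ^ (-(2:ℝ)/3) := by
  set y : ℝ := t' ^ (-(1:ℝ)/3) with hy_def
  have hy0 : 0 < y := Real.rpow_pos_of_pos h0 _
  have hy1 : 1 ≤ y := by
    have := Real.rpow_le_rpow_of_exponent_ge h0 h1.le (by norm_num : -(1:ℝ)/3 ≤ 0)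
    rwa [Real.rpow_zero] at this
  set V : ℕ := ⌈y⌉₊ with hV_def
  have hyV : y ≤ (V:ℝ) := Nat.le_ceil _
  have hV1 : 1 ≤ V := by
    have := Nat.one_le_ceil_iff.2 hy0
    omega
  have hVlt : (V:ℝ) < y + 1 := Nat.ceil_lt_add_one hy0.le
  have hV2y : (V:ℝ) ≤ 2 * y := by linarith
  have hst : 0 < Real.sqrt t' := Real.sqrt_pos.2 h0
  -- identities for the two summand shapes
  have hAeq : ∀ k : ℕ, 8 / (Real.sqrt ((k:ℝ)+1) * Real.sqrt t')
      = (8 / Real.sqrt t') * (1 / Real.sqrt ((k:ℝ)+1)) := by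
    intro k; ring
  have hBeq : ∀ k : ℕ, 20 / (((k:ℝ)+1)^2 * t')
      = (20 / t') * (1 / ((k:ℝ)+1)^2) := by
    intro k
    have hk : ((k:ℝ)+1) ≠ 0 := by positivity
    field_simp
  calc ∑ k ∈ range n, min (8 / (Real.sqrt ((k:ℝ)+1) * Real.sqrt t')) (20 / (((k:ℝ)+1)^2 * t'))
      ≤ ∑ k ∈ range V, 8 / (Real.sqrt ((k:ℝ)+1) * Real.sqrt t')
        + ∑ k ∈ Ico V n, 20 / (((k:ℝ)+1)^2 * t') := by
        apply _root_.sum_min_le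
        · intro k; positivity
        · intro k; positivity
    _ ≤ (8 / Real.sqrt t') * (2 * Real.sqrt (V:ℝ)) + (20 / t') * (1 / (V:ℝ)) := by
        apply add_le_add
        · have : ∀ k ∈ range V, 8 / (Real.sqrt ((k:ℝ)+1) * Real.sqrt t')
              = (8 / Real.sqrt t') * (1 / Real.sqrt ((k:ℝ)+1)) := fun k _ => hAeq k
          rw [Finset.sum_congr rfl this, ← Finset.mul_sum]
          exact mul_le_mul_of_nonneg_left (sum_inv_sqrt_le V) (by positivity)
        · have : ∀ k ∈ Ico V n, 20 / (((k:ℝ)+1)^2 * t')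
              = (20 / t') * (1 / ((k:ℝ)+1)^2) := fun k _ => hBeq k
          rw [Finset.sum_congr rfl this, ← Finset.mul_sum]
          exact mul_le_mul_of_nonneg_left (sum_inv_sq_tail V hV1 n) (by positivity)
    _ ≤ 44 * t' ^ (-(2:ℝ)/3) := by
        -- first term
        have hsy : Real.sqrt y = t' ^ (-(1:ℝ)/6) := by
          rw [hy_def, Real.sqrt_eq_rpow, ← Real.rpow_mul h0.le]
          norm_num
        have hsqV : Real.sqrt (V:ℝ) ≤ Real.sqrt 2 * Real.sqrt y := by
          rw [← Real.sqrt_mul (by norm_num : (0:ℝ) ≤ 2)]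
          exact Real.sqrt_le_sqrt hV2y
        have hterm1 : (8 / Real.sqrt t') * (2 * Real.sqrt (V:ℝ))
            ≤ 16 * Real.sqrt 2 * (t' ^ (-(1:ℝ)/6) / Real.sqrt t') := by
          have h1' : (8 / Real.sqrt t') * (2 * Real.sqrt (V:ℝ))
              ≤ (8 / Real.sqrt t') * (2 * (Real.sqrt 2 * Real.sqrt y)) := by
            apply mul_le_mul_of_nonneg_left _ (by positivity)
            linarith
          have h2' : (8 / Real.sqrt t') * (2 * (Real.sqrt 2 * Real.sqrt y))
              = 16 * Real.sqrt 2 * (Real.sqrt y / Real.sqrt t') := by ring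
          rw [h2', hsy] at h1'
          exact h1'
        have hrpow1 : t' ^ (-(1:ℝ)/6) / Real.sqrt t' = t' ^ (-(2:ℝ)/3) := by
          rw [Real.sqrt_eq_rpow, ← Real.rpow_sub h0]
          norm_num
        have hsqrt2 : Real.sqrt 2 ≤ 3/2 := sqrt_two_le_three_halves
        have hrp_pos : 0 < t' ^ (-(2:ℝ)/3) := Real.rpow_pos_of_pos h0 _
        have hterm1' : (8 / Real.sqrt t') * (2 * Real.sqrt (V:ℝ)) ≤ 24 * t' ^ (-(2:ℝ)/3) := by
          rw [hrpow1] at hterm1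
          nlinarith [hterm1, hrp_pos, Real.sqrt_nonneg 2]
        -- second term
        have hinvV : 1 / (V:ℝ) ≤ t' ^ ((1:ℝ)/3) := by
          have h1' : 1 / (V:ℝ) ≤ 1 / y := by
            apply one_div_le_one_div_of_le hy0 hyV
          have h2' : 1 / y = t' ^ ((1:ℝ)/3) := by
            rw [hy_def, one_div, ← Real.rpow_neg h0.le]
            norm_num
          linarith
        have hterm2 : (20 / t') * (1 / (V:ℝ)) ≤ 20 * t' ^ (-(2:ℝ)/3) := by
          have h1' : (20 / t') * (1 / (V:ℝ)) ≤ (20 / t') * t' ^ ((1:ℝ)/3) := by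
            apply mul_le_mul_of_nonneg_left hinvV (by positivity)
          have h2' : (20 / t') * t' ^ ((1:ℝ)/3) = 20 * (t' ^ ((1:ℝ)/3) * (t' ^ ((1:ℝ)) )⁻¹) := by
            rw [Real.rpow_one]
            ring
          have h3' : t' ^ ((1:ℝ)/3) * (t' ^ ((1:ℝ)))⁻¹ = t' ^ (-(2:ℝ)/3) := by
            rw [← Real.rpow_neg h0.le, ← Real.rpow_add h0]
            norm_num
          rw [h2', h3'] at h1'
          exact h1'
        linarith

lemma term_pos {t : ℝ} (ht : 0 < t) (p : ℕ × ℕ) :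
    (0:ℝ) < (((p.1+1) * (p.2+1) * ((p.1+1) + (p.2+1)) : ℕ) : ℝ) * (t/2) := by
  have h1 : 0 < ((p.1+1) * (p.2+1) * ((p.1+1) + (p.2+1)) : ℕ) := by positivity
  have h2 : (0:ℝ) < (((p.1+1) * (p.2+1) * ((p.1+1) + (p.2+1)) : ℕ) : ℝ) := by
    exact_mod_cast h1
  positivity

lemma sum_box_le {t : ℝ} (ht : 0 < t) (ht1 : t < 1) (S : Finset (ℕ × ℕ)) :
    ∑ p ∈ S, gfun ((((p.1+1) * (p.2+1) * ((p.1+1) + (p.2+1)) : ℕ) : ℝ) * (t/2))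
      ≤ 200 * t ^ (-(2:ℝ)/3) := by
  set t' : ℝ := t/2 with ht'_def
  have h0 : 0 < t' := by positivity
  have h1 : t' < 1 := by rw [ht'_def]; linarith
  set F : ℕ × ℕ → ℝ := fun p =>
    gfun ((((p.1+1) * (p.2+1) * ((p.1+1) + (p.2+1)) : ℕ) : ℝ) * t') with hF_def
  have hFnonneg : ∀ p : ℕ × ℕ, 0 ≤ F p := fun p => gfun_nonneg (term_pos ht p)
  have hFsymm : ∀ p : ℕ × ℕ, F (p.2, p.1) = F p := by
    intro p
    simp only [hF_def]
    congr 2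
    push_cast
    ring
  set n : ℕ := (S.sup fun p => max p.1 p.2) + 1 with hn_def
  have hsub : S ⊆ range n ×ˢ range n := by
    intro p hp
    have hle := Finset.le_sup (f := fun p : ℕ × ℕ => max p.1 p.2) hp
    have hp1 : p.1 ≤ S.sup fun p => max p.1 p.2 := le_trans (le_max_left _ _) hle
    have hp2 : p.2 ≤ S.sup fun p => max p.1 p.2 := le_trans (le_max_right _ _) hle
    simp only [Finset.mem_product, Finset.mem_range]
    omega
  -- key bound on triangle terms
  have htri : ∀ j k : ℕ, j ≤ k → F (j, k) ≤ gfun (((j:ℝ)+1) * (((k:ℝ)+1)^2 * t')) := by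
    intro j k hjk
    have hx : 0 < ((j:ℝ)+1) * (((k:ℝ)+1)^2 * t') := by positivity
    apply gfun_anti hx
    have hnat : (j+1) * (k+1) * (k+1) ≤ (j+1) * (k+1) * ((j+1) + (k+1)) :=
      Nat.mul_le_mul_left _ (by omega)
    have hcast : (((j+1) * (k+1) * (k+1) : ℕ) : ℝ) ≤ (((j+1) * (k+1) * ((j+1) + (k+1)) : ℕ) : ℝ) := by
      exact_mod_cast hnat
    calc ((j:ℝ)+1) * (((k:ℝ)+1)^2 * t') = (((j+1) * (k+1) * (k+1) : ℕ) : ℝ) * t' := by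
          push_cast; ring
      _ ≤ (((j+1) * (k+1) * ((j+1) + (k+1)) : ℕ) : ℝ) * t' :=
          mul_le_mul_of_nonneg_right hcast h0.le
  -- inner sum bound
  have hinner : ∀ k : ℕ, ∑ j ∈ range n, (if j ≤ k then F (j, k) else 0)
      ≤ min (8 / (Real.sqrt ((k:ℝ)+1) * Real.sqrt t')) (20 / (((k:ℝ)+1)^2 * t')) := by
    intro k
    have step1 : ∑ j ∈ range n, (if j ≤ k then F (j, k) else 0)
        = ∑ j ∈ (range n).filter (fun j => j ≤ k), F (j, k) := (Finset.sum_filter _ _).symm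
    have step2 : (range n).filter (fun j => j ≤ k) ⊆ range (k+1) := by
      intro j hj
      simp only [Finset.mem_filter, Finset.mem_range] at hj
      simp only [Finset.mem_range]
      omega
    have step3 : ∑ j ∈ (range n).filter (fun j => j ≤ k), F (j, k)
        ≤ ∑ j ∈ range (k+1), F (j, k) :=
      Finset.sum_le_sum_of_subset_of_nonneg step2 (fun j _ _ => hFnonneg (j, k))
    have step4 : ∑ j ∈ range (k+1), F (j, k)
        ≤ ∑ j ∈ range (k+1), gfun (((j:ℝ)+1) * (((k:ℝ)+1)^2 * t')) :=
      Finset.sum_le_sum (fun j hj => htri j k (by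
        simp only [Finset.mem_range] at hj; omega))
    calc ∑ j ∈ range n, (if j ≤ k then F (j, k) else 0)
        = ∑ j ∈ (range n).filter (fun j => j ≤ k), F (j, k) := step1
      _ ≤ ∑ j ∈ range (k+1), F (j, k) := step3
      _ ≤ ∑ j ∈ range (k+1), gfun (((j:ℝ)+1) * (((k:ℝ)+1)^2 * t')) := step4
      _ ≤ _ := inner_bound h0 h1 k
  -- assembling
  have hhalf : ∑ p ∈ range n ×ˢ range n, (if p.1 ≤ p.2 then F p else 0)
      ≤ 44 * t' ^ (-(2:ℝ)/3) := by
    rw [Finset.sum_product]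
    rw [Finset.sum_comm]
    calc ∑ k ∈ range n, ∑ j ∈ range n, (if j ≤ k then F (j, k) else 0)
        ≤ ∑ k ∈ range n, min (8 / (Real.sqrt ((k:ℝ)+1) * Real.sqrt t'))
            (20 / (((k:ℝ)+1)^2 * t')) := Finset.sum_le_sum (fun k _ => hinner k)
      _ ≤ 44 * t' ^ (-(2:ℝ)/3) := outer_bound h0 h1 n
  have hswap : ∑ p ∈ range n ×ˢ range n, (if p.2 ≤ p.1 then F p else 0)
      = ∑ p ∈ range n ×ˢ range n, (if p.1 ≤ p.2 then F p else 0) := by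
    rw [Finset.sum_product, Finset.sum_comm, Finset.sum_product]
    apply Finset.sum_congr rfl
    intro j _
    apply Finset.sum_congr rfl
    intro k _
    have := hFsymm (j, k)
    simp only at this
    rw [← this]
  have hsplit : ∀ p : ℕ × ℕ, F p ≤ (if p.1 ≤ p.2 then F p else 0) + (if p.2 ≤ p.1 then F p else 0) := by
    intro p
    rcases le_total p.1 p.2 with h | h
    · rw [if_pos h]
      rcases le_or_gt p.2 p.1 with h' | h'
      · rw [if_pos h']; linarith [hFnonneg p]
      · rw [if_neg (by omega)]; linarith
    · rw [if_pos h]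
      rcases le_or_gt p.1 p.2 with h' | h'
      · rw [if_pos h']; linarith [hFnonneg p]
      · rw [if_neg (by omega)]; linarith [hFnonneg p]
  have hbox : ∑ p ∈ range n ×ˢ range n, F p ≤ 88 * t' ^ (-(2:ℝ)/3) := by
    calc ∑ p ∈ range n ×ˢ range n, F p
        ≤ ∑ p ∈ range n ×ˢ range n,
            ((if p.1 ≤ p.2 then F p else 0) + (if p.2 ≤ p.1 then F p else 0)) :=
          Finset.sum_le_sum (fun p _ => hsplit p)
      _ = ∑ p ∈ range n ×ˢ range n, (if p.1 ≤ p.2 then F p else 0)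
          + ∑ p ∈ range n ×ˢ range n, (if p.2 ≤ p.1 then F p else 0) := Finset.sum_add_distrib
      _ ≤ 44 * t' ^ (-(2:ℝ)/3) + 44 * t' ^ (-(2:ℝ)/3) := by
          rw [hswap]; linarith [hhalf]
      _ = 88 * t' ^ (-(2:ℝ)/3) := by ring
  have hS : ∑ p ∈ S, F p ≤ 88 * t' ^ (-(2:ℝ)/3) :=
    le_trans (Finset.sum_le_sum_of_subset_of_nonneg hsub (fun p _ _ => hFnonneg p)) hbox
  -- convert t'^{-2/3} to t^{-2/3}
  have hconv : (t' : ℝ) ^ (-(2:ℝ)/3) ≤ 2 * t ^ (-(2:ℝ)/3) := by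
    have h2 : t' ^ (-(2:ℝ)/3) = t ^ (-(2:ℝ)/3) / 2 ^ (-(2:ℝ)/3) := by
      rw [ht'_def, Real.div_rpow ht.le (by norm_num)]
    have h3 : (1:ℝ) ≤ 2 ^ ((2:ℝ)/3) := by
      have := Real.rpow_le_rpow_of_exponent_le (by norm_num : (1:ℝ) ≤ 2) (by norm_num : (0:ℝ) ≤ 2/3)
      rwa [Real.rpow_zero] at this
    have h4 : 2 ^ (-(2:ℝ)/3) = (2 ^ ((2:ℝ)/3) : ℝ)⁻¹ := by
      rw [← Real.rpow_neg (by norm_num : (0:ℝ) ≤ 2)]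
      norm_num
    have h5 : 2 ^ ((2:ℝ)/3) ≤ (2:ℝ) := by
      have := Real.rpow_le_rpow_of_exponent_le (by norm_num : (1:ℝ) ≤ 2) (by norm_num : (2:ℝ)/3 ≤ 1)
      rwa [Real.rpow_one] at this
    have hp23 : (0:ℝ) < 2 ^ ((2:ℝ)/3) := Real.rpow_pos_of_pos (by norm_num) _
    have htpos : (0:ℝ) ≤ t ^ (-(2:ℝ)/3) := (Real.rpow_pos_of_pos ht _).le
    rw [h2, h4, div_eq_mul_inv, inv_inv]
    nlinarith [htpos, hp23]
  have : (88:ℝ) * t' ^ (-(2:ℝ)/3) ≤ 200 * t ^ (-(2:ℝ)/3) := by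
    have hps : (0:ℝ) < t' ^ (-(2:ℝ)/3) := Real.rpow_pos_of_pos h0 _
    nlinarith [hconv, Real.rpow_pos_of_pos ht (-(2:ℝ)/3)]
  linarith [hS]

theorem su3h_bigO_at_zero :
    ∃ C > (0:ℝ), ∃ t₀ > (0:ℝ), ∀ t : ℝ, 0 < t → t < t₀ →
      su3h t ≤ C * t ^ (-(2:ℝ)/3) := by
  refine ⟨200, by norm_num, 1, by norm_num, ?_⟩
  intro t ht ht1
  have hterm : ∀ p : ℕ × ℕ,
      -Real.log (1 - Real.exp (-(((p.1+1) * (p.2+1) * ((p.1+1) + (p.2+1)) : ℕ) : ℝ) * t / 2))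
      = gfun ((((p.1+1) * (p.2+1) * ((p.1+1) + (p.2+1)) : ℕ) : ℝ) * (t/2)) := by
    intro p
    unfold gfun
    congr 2
    ring
  have hsu : su3h t
      = ∑' p : ℕ × ℕ, gfun ((((p.1+1) * (p.2+1) * ((p.1+1) + (p.2+1)) : ℕ) : ℝ) * (t/2)) := by
    rw [su3h, ← tsum_neg]
    exact tsum_congr hterm
  rw [hsu]
  set f : ℕ × ℕ → ℝ := fun p =>
    gfun ((((p.1+1) * (p.2+1) * ((p.1+1) + (p.2+1)) : ℕ) : ℝ) * (t/2)) with hf_def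
  have hnonneg : ∀ p, 0 ≤ f p := fun p => gfun_nonneg (term_pos ht p)
  have hb : ∀ s : Finset (ℕ × ℕ), ∑ p ∈ s, f p ≤ 200 * t ^ (-(2:ℝ)/3) :=
    fun s => sum_box_le ht ht1 s
  have hsummable : Summable f := summable_of_sum_le hnonneg hb
  exact Summable.tsum_le_of_sum_le hsummable hb
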